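/- arXiv:1111.3509 — 2 statements merged into one kernel-verified Lean document; each statement's English description precedes it below -/
import Mathlib

section
/- Let λ ∈ [0,1], α_λ = (1/√d)[√((d−1)λ+1) − √(1−λ)], β_λ = √(1−λ), and χ_λ = α_λ φ_0 + β_λ ψ_0. Then for any unit vector η ∈ C^d, the vector φ = χ_λ ⊗ η satisfies ⟨φ,(A(j)⊗id)φ⟩ = λδ(j) + (1−λ)/d and ⟨φ,(B(k)⊗id)φ⟩ = γ_max δ(k) + (1−γ_max)/d with γ_max = (1/d)[(d−2)(1−λ) + 2√((1−d)λ² + (d−2)λ + 1)]. In particular χ_λ is a unit vector. -/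
open Matrix Kronecker Finset
open scoped ComplexOrder

/-- ω = e^{2πi/d} -/
noncomputable def ww (d : ℕ) : ℂ := Complex.exp (2 * Real.pi * Complex.I / d)

/-- shift unitary U_x φ_k = φ_{k+x} -/
noncomputable def Um (d : ℕ) (x : ZMod d) : Matrix (ZMod d) (ZMod d) ℂ :=
  fun i j => if i = j + x then 1 else 0

/-- modulation unitary V_y φ_k = ω^{yk} φ_k -/
noncomputable def Vm (d : ℕ) (y : ZMod d) : Matrix (ZMod d) (ZMod d) ℂ :=
  Matrix.diagonal fun i => ww d ^ (y * i).val

/-- finite Fourier transform F φ_k = (1/√d) Σ_h ω^{-hk} φ_h -/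
noncomputable def Fm (d : ℕ) : Matrix (ZMod d) (ZMod d) ℂ :=
  fun i j => (1 / Real.sqrt d : ℂ) * (ww d)⁻¹ ^ (i * j).val

/-- the standard orthonormal basis vector φ_k -/
noncomputable def phiV (d : ℕ) (k : ZMod d) : ZMod d → ℂ := Pi.single k 1

/-- ψ_k = F* φ_k -/
noncomputable def psiV (d : ℕ) [NeZero d] (k : ZMod d) : ZMod d → ℂ :=
  (Fm d)ᴴ.mulVec (phiV d k)

/-- A(j) = |φ_j⟩⟨φ_j| -/
noncomputable def Aob (d : ℕ) (j : ZMod d) : Matrix (ZMod d) (ZMod d) ℂ :=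
  vecMulVec (phiV d j) (star (phiV d j))

/-- B(k) = |ψ_k⟩⟨ψ_k| -/
noncomputable def Bob (d : ℕ) [NeZero d] (k : ZMod d) : Matrix (ZMod d) (ZMod d) ℂ :=
  vecMulVec (psiV d k) (star (psiV d k))

/-! ψ₀ is the constant vector `d^{-1/2}`, so `χ = α φ₀ + β ψ₀` has the real coordinates
`α δ(j) + β/√d`, and by orthonormality of the `ψ_k` its overlaps `⟨ψ_k, χ⟩ = α/√d + β δ(k)` are
real as well. On a product vector `χ ⊗ η` with `‖η‖ = 1` the expectation of `M ⊗ 1` is that of `M`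
in `χ`, and for the rank-one projectors `A(j)`, `B(k)` it is the squared overlap. Squaring the
overlaps gives both distributions once `√((1-d)λ² + (d-2)λ + 1)` is factored as
`√((d-1)λ+1) · √(1-λ)`; summing the first one over `j` gives `‖χ‖ = 1`. -/

section ProductVectors

variable {R l m n p : Type*} [Fintype m] [Fintype n] [CommSemiring R]

theorem kronecker_mulVec_prod (M : Matrix l m R) (N : Matrix p n R) (x : m → R) (y : n → R) :
    (M ⊗ₖ N) *ᵥ (fun q : m × n => x q.1 * y q.2) = fun q => (M *ᵥ x) q.1 * (N *ᵥ y) q.2 := by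
  ext q
  simp only [mulVec, dotProduct, kroneckerMap_apply, Fintype.sum_prod_type, Finset.sum_mul_sum]
  exact Finset.sum_congr rfl fun i _ => Finset.sum_congr rfl fun j _ => by ring

theorem prod_dotProduct_prod (a c : m → R) (b e : n → R) :
    (fun q : m × n => a q.1 * b q.2) ⬝ᵥ (fun q => c q.1 * e q.2) = (a ⬝ᵥ c) * (b ⬝ᵥ e) := by
  simp only [dotProduct, Fintype.sum_prod_type, Finset.sum_mul_sum]
  exact Finset.sum_congr rfl fun i _ => Finset.sum_congr rfl fun j _ => by ring

theorem star_prod_dotProduct_kronecker_one_mulVec [StarRing R] [DecidableEq n]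
    (M : Matrix m m R) (x : m → R) {y : n → R} (hy : star y ⬝ᵥ y = 1) :
    star (fun q : m × n => x q.1 * y q.2) ⬝ᵥ
        ((M ⊗ₖ (1 : Matrix n n R)) *ᵥ fun q => x q.1 * y q.2) =
      star x ⬝ᵥ (M *ᵥ x) := by
  have hstar : star (fun q : m × n => x q.1 * y q.2) = fun q => star x q.1 * star y q.2 := by
    ext q; exact star_mul' _ _
  rw [kronecker_mulVec_prod, hstar, prod_dotProduct_prod, one_mulVec, hy, mul_one]

theorem star_dotProduct_vecMulVec_mulVec [StarRing R] (u x : n → R) :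
    star x ⬝ᵥ (vecMulVec u (star u) *ᵥ x) = star (star u ⬝ᵥ x) * (star u ⬝ᵥ x) := by
  rw [vecMulVec_mulVec, op_smul_eq_smul, dotProduct_smul, smul_eq_mul,
    star_dotProduct x u, mul_comm]

theorem star_dotProduct_vecMulVec_mulVec_of_real {u x : n → ℂ} {r : ℝ}
    (h : star u ⬝ᵥ x = r) : star x ⬝ᵥ (vecMulVec u (star u) *ᵥ x) = ((r ^ 2 : ℝ) : ℂ) := by
  rw [star_dotProduct_vecMulVec_mulVec, h, Complex.star_def, Complex.conj_ofReal]
  push_cast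
  ring

end ProductVectors

section Fourier

variable {d : ℕ} [NeZero d]

theorem ww_pow_val (x : ZMod d) : ww d ^ x.val = ZMod.stdAddChar x := by
  rw [ZMod.stdAddChar_apply, ZMod.toCircle_apply, ww, ← Complex.exp_nat_mul]
  congr 1
  ring

theorem psiV_apply (k i : ZMod d) :
    psiV d k i = (((Real.sqrt d)⁻¹ : ℝ) : ℂ) * ZMod.stdAddChar (k * i) := by
  rw [psiV, phiV, mulVec_single_one, col_apply, conjTranspose_apply, Fm, star_mul', inv_pow,
    ww_pow_val, AddChar.inv_apply_eq_conj]
  simp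

theorem psiV_zero_apply (i : ZMod d) : psiV d 0 i = (((Real.sqrt d)⁻¹ : ℝ) : ℂ) := by
  rw [psiV_apply, zero_mul, AddChar.map_zero_eq_one, mul_one]

theorem star_psiV_dotProduct_psiV (k k' : ZMod d) :
    star (psiV d k) ⬝ᵥ psiV d k' = if k = k' then 1 else 0 := by
  have hchar : ∀ i : ZMod d, star (ZMod.stdAddChar (k * i)) * ZMod.stdAddChar (k' * i) =
      ZMod.stdAddChar (i * (k' - k)) := by
    intro i
    rw [Complex.star_def, ← AddChar.map_neg_eq_conj, ← AddChar.map_add_eq_mul]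
    ring_nf
  calc star (psiV d k) ⬝ᵥ psiV d k'
      = (((d : ℝ)⁻¹ : ℝ) : ℂ) * ∑ i : ZMod d, ZMod.stdAddChar (i * (k' - k)) := by
        simp only [dotProduct, Pi.star_apply, psiV_apply, star_mul', Finset.mul_sum, ← hchar]
        refine Finset.sum_congr rfl fun i _ => ?_
        have hsq : (((Real.sqrt d)⁻¹ : ℝ) : ℂ) * (((Real.sqrt d)⁻¹ : ℝ) : ℂ) =
            ((d : ℝ)⁻¹ : ℝ) := by
          rw [← Complex.ofReal_mul, ← mul_inv, Real.mul_self_sqrt (Nat.cast_nonneg d)]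
        rw [Complex.star_def, Complex.conj_ofReal, ← hsq]
        ring
    _ = if k = k' then 1 else 0 := by
        rw [AddChar.sum_mulShift _ (ZMod.isPrimitive_stdAddChar d), ZMod.card]
        simp only [sub_eq_zero, eq_comm (a := k')]
        split_ifs
        · push_cast
          exact inv_mul_cancel₀ (Nat.cast_ne_zero.2 (NeZero.ne d))
        · simp

end Fourier

noncomputable def chiV (d : ℕ) [NeZero d] (a b : ℝ) : ZMod d → ℂ :=
  fun i => (a : ℂ) * phiV d 0 i + (b : ℂ) * psiV d 0 i

section Overlaps

variable {d : ℕ} [NeZero d]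

theorem star_phiV_dotProduct (j : ZMod d) (v : ZMod d → ℂ) : star (phiV d j) ⬝ᵥ v = v j := by
  rw [phiV, ← Pi.single_star, star_one, single_one_dotProduct]

theorem star_phiV_dotProduct_chiV (a b : ℝ) (j : ZMod d) :
    star (phiV d j) ⬝ᵥ chiV d a b =
      ((a * (if j = 0 then 1 else 0) + b * (Real.sqrt d)⁻¹ : ℝ) : ℂ) := by
  rw [star_phiV_dotProduct, chiV, psiV_zero_apply, phiV, Pi.single_apply]
  split_ifs <;> push_cast <;> ring

theorem star_psiV_dotProduct_chiV (a b : ℝ) (k : ZMod d) :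
    star (psiV d k) ⬝ᵥ chiV d a b =
      ((a * (Real.sqrt d)⁻¹ + b * (if k = 0 then 1 else 0) : ℝ) : ℂ) := by
  have hchi : chiV d a b = (a : ℂ) • phiV d 0 + (b : ℂ) • psiV d 0 := rfl
  rw [hchi, dotProduct_add, dotProduct_smul, dotProduct_smul, star_psiV_dotProduct_psiV, phiV,
    dotProduct_single_one, Pi.star_apply, psiV_apply, mul_zero, AddChar.map_zero_eq_one, mul_one,
    Complex.star_def, Complex.conj_ofReal]
  split_ifs <;> simp

theorem sum_star_dotProduct_Aob_mulVec (x : ZMod d → ℂ) :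
    ∑ j, star x ⬝ᵥ (Aob d j *ᵥ x) = star x ⬝ᵥ x := by
  simp only [Aob, star_dotProduct_vecMulVec_mulVec, star_phiV_dotProduct]
  rfl

end Overlaps

section Coefficients

noncomputable def alphaL (d l : ℝ) : ℝ :=
  (1 / Real.sqrt d) * (Real.sqrt ((d - 1) * l + 1) - Real.sqrt (1 - l))

noncomputable def betaL (l : ℝ) : ℝ := Real.sqrt (1 - l)

noncomputable def gammaMax (d l : ℝ) : ℝ :=
  (1 / d) * ((d - 2) * (1 - l) + 2 * Real.sqrt ((1 - d) * l ^ 2 + (d - 2) * l + 1))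

variable {d l : ℝ}

theorem sq_alphaL_mul_ite_add_betaL (hd : 0 < d) (hl0 : 0 ≤ l) (hl1 : l ≤ 1)
    (p : Prop) [Decidable p] :
    (alphaL d l * (if p then 1 else 0) + betaL l * (Real.sqrt d)⁻¹) ^ 2 =
      l * (if p then 1 else 0) + (1 - l) / d := by
  have hA : Real.sqrt ((d - 1) * l + 1) ^ 2 = (d - 1) * l + 1 := Real.sq_sqrt (by nlinarith)
  have hB : Real.sqrt (1 - l) ^ 2 = 1 - l := Real.sq_sqrt (by linarith)
  have hs : Real.sqrt d ^ 2 = d := Real.sq_sqrt hd.le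
  rw [alphaL, betaL]
  split_ifs
  · calc _ = Real.sqrt ((d - 1) * l + 1) ^ 2 / Real.sqrt d ^ 2 := by ring
      _ = _ := by rw [hA, hs]; field_simp; ring
  · calc _ = Real.sqrt (1 - l) ^ 2 / Real.sqrt d ^ 2 := by ring
      _ = _ := by rw [hB, hs]; ring

theorem sq_alphaL_add_betaL_mul_ite (hd : 0 < d) (hl0 : 0 ≤ l) (hl1 : l ≤ 1)
    (p : Prop) [Decidable p] :
    (alphaL d l * (Real.sqrt d)⁻¹ + betaL l * (if p then 1 else 0)) ^ 2 =
      gammaMax d l * (if p then 1 else 0) + (1 - gammaMax d l) / d := by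
  have hfactor : (1 - d) * l ^ 2 + (d - 2) * l + 1 = ((d - 1) * l + 1) * (1 - l) := by ring
  have hA : Real.sqrt ((d - 1) * l + 1) ^ 2 = (d - 1) * l + 1 := Real.sq_sqrt (by nlinarith)
  have hB : Real.sqrt (1 - l) ^ 2 = 1 - l := Real.sq_sqrt (by linarith)
  have hs : 1 / Real.sqrt d * (Real.sqrt d)⁻¹ = 1 / d := by
    rw [one_div, ← mul_inv, Real.mul_self_sqrt hd.le, one_div]
  rw [alphaL, betaL, gammaMax, hfactor, Real.sqrt_mul' _ (by linarith)]
  set A := Real.sqrt ((d - 1) * l + 1)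
  set B := Real.sqrt (1 - l)
  have hAB : A ^ 2 + (d - 1) * B ^ 2 = d := by rw [hA, hB]; ring
  rw [← hB, mul_right_comm, hs]
  split_ifs
  · field_simp
    linear_combination hAB
  · field_simp
    linear_combination hAB

end Coefficients

theorem sum_mul_ite_add_div_card {ι : Type*} [Fintype ι] [DecidableEq ι] (i₀ : ι) (l : ℝ) :
    ∑ i, (l * (if i = i₀ then 1 else 0) + (1 - l) / Fintype.card ι) = 1 := by
  have : Nonempty ι := ⟨i₀⟩
  have hcard : (Fintype.card ι : ℝ) ≠ 0 := Nat.cast_ne_zero.2 Fintype.card_ne_zero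
  simp only [Finset.sum_add_distrib, mul_ite, mul_one, mul_zero, Finset.sum_ite_eq',
    Finset.mem_univ, if_true, Finset.sum_const, Finset.card_univ, nsmul_eq_mul]
  field_simp
  ring

theorem optimal_vector_achieves_bound_general (d : ℕ) [NeZero d]
    (l : ℝ) (hl : 0 ≤ l) (hl1 : l ≤ 1) (η : ZMod d → ℂ) (hη : star η ⬝ᵥ η = 1) :
    let αl : ℝ := (1 / Real.sqrt d) * (Real.sqrt ((d - 1) * l + 1) - Real.sqrt (1 - l))
    let βl : ℝ := Real.sqrt (1 - l)
    let χ : ZMod d → ℂ := fun i => (αl : ℂ) * phiV d 0 i + (βl : ℂ) * psiV d 0 i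
    let φ : ZMod d × ZMod d → ℂ := fun p => χ p.1 * η p.2
    let γmax : ℝ := (1 / d) * ((d - 2) * (1 - l) +
      2 * Real.sqrt ((1 - d) * l ^ 2 + (d - 2) * l + 1))
    (star χ ⬝ᵥ χ = 1) ∧
    (∀ j : ZMod d,
      star φ ⬝ᵥ ((Aob d j ⊗ₖ (1 : Matrix (ZMod d) (ZMod d) ℂ)).mulVec φ) =
        ((l * (if j = 0 then 1 else 0) + (1 - l) / d : ℝ) : ℂ)) ∧
    (∀ k : ZMod d,
      star φ ⬝ᵥ ((Bob d k ⊗ₖ (1 : Matrix (ZMod d) (ZMod d) ℂ)).mulVec φ) =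
        ((γmax * (if k = 0 then 1 else 0) + (1 - γmax) / d : ℝ) : ℂ)) := by
  intro αl βl χ φ γmax
  have hd : (0 : ℝ) < d := Nat.cast_pos.2 (NeZero.pos d)
  have hχ : χ = chiV d αl βl := rfl
  have expect_Aob : ∀ j : ZMod d, star χ ⬝ᵥ (Aob d j *ᵥ χ) =
      ((l * (if j = 0 then 1 else 0) + (1 - l) / d : ℝ) : ℂ) := fun j => by
    rw [hχ, Aob, star_dotProduct_vecMulVec_mulVec_of_real (star_phiV_dotProduct_chiV αl βl j)]
    exact congrArg _ (sq_alphaL_mul_ite_add_betaL hd hl hl1 _)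
  refine ⟨?_, fun j => ?_, fun k => ?_⟩
  · have hsum := sum_mul_ite_add_div_card (0 : ZMod d) l
    rw [ZMod.card] at hsum
    rw [← sum_star_dotProduct_Aob_mulVec, Finset.sum_congr rfl fun j _ => expect_Aob j,
      ← Complex.ofReal_sum, hsum, Complex.ofReal_one]
  · rw [star_prod_dotProduct_kronecker_one_mulVec _ _ hη, expect_Aob]
  · rw [star_prod_dotProduct_kronecker_one_mulVec _ _ hη, hχ, Bob,
      star_dotProduct_vecMulVec_mulVec_of_real (star_psiV_dotProduct_chiV αl βl k)]
    exact congrArg _ (sq_alphaL_add_betaL_mul_ite hd hl hl1 _)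

theorem optimal_vector_achieves_bound (d : ℕ) (hd : 2 ≤ d) [NeZero d]
    (l : ℝ) (hl : 0 ≤ l) (hl1 : l ≤ 1) (η : ZMod d → ℂ) (hη : star η ⬝ᵥ η = 1) :
    let αl : ℝ := (1 / Real.sqrt d) * (Real.sqrt ((d - 1) * l + 1) - Real.sqrt (1 - l))
    let βl : ℝ := Real.sqrt (1 - l)
    let χ : ZMod d → ℂ := fun i => (αl : ℂ) * phiV d 0 i + (βl : ℂ) * psiV d 0 i
    let φ : ZMod d × ZMod d → ℂ := fun p => χ p.1 * η p.2
    let γmax : ℝ := (1 / d) * ((d - 2) * (1 - l) +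
      2 * Real.sqrt ((1 - d) * l ^ 2 + (d - 2) * l + 1))
    (star χ ⬝ᵥ χ = 1) ∧
    (∀ j : ZMod d,
      star φ ⬝ᵥ ((Aob d j ⊗ₖ (1 : Matrix (ZMod d) (ZMod d) ℂ)).mulVec φ) =
        ((l * (if j = 0 then 1 else 0) + (1 - l) / d : ℝ) : ℂ)) ∧
    (∀ k : ZMod d,
      star φ ⬝ᵥ ((Bob d k ⊗ₖ (1 : Matrix (ZMod d) (ZMod d) ℂ)).mulVec φ) =
        ((γmax * (if k = 0 then 1 else 0) + (1 - γmax) / d : ℝ) : ℂ)) :=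
  optimal_vector_achieves_bound_general d l hl hl1 η hη
end

section
/- Let T be a density operator on C^d and C_T(j,k) = (1/d)U_j V_k T V_k* U_j* the associated covariant phase space observable. Then the linear span of {C_T(j,k) : j,k ∈ Z_d} equals all linear operators on C^d (i.e., C_T is informationally complete) if and only if tr[T U_x V_y] ≠ 0 for all x, y ∈ Z_d. -/
open Matrix Kronecker Finset
open scoped ComplexOrder

/-!
The Weyl operators `W q = U_{q.1} V_{q.2}` form a basis of the `d × d` matrices which is
orthogonal for `(A, B) ↦ tr (Aᴴ B)`, and conjugation by `W p` multiplies `W q` by `e (ω p q)`,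
where `e` is the standard additive character of `ZMod d` and `ω` a symplectic form on
`ZMod d × ZMod d`. Expanding `T = ∑ c q • W q`, the
effects are `∑ q, d⁻¹ e (ω p q) c q • W q`: their coefficient matrix is the character matrix
`(e (ω p q))`, which is invertible by character orthogonality, times `diag c`. So they span
exactly when every `c q` is nonzero, and `d * c q = tr (W qᴴ T)` is a phase times
`tr (T W (-q))`.
-/

namespace Module.Basis

variable {K M ι κ : Type*} [Field K] [AddCommGroup M] [Module K M] [Fintype ι] [Fintype κ]
  [DecidableEq ι]

theorem span_range_sum_smul_eq_top_iff (b : Basis ι K M) {χ : Matrix κ ι K} {ψ : Matrix ι κ K}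
    (hψχ : ψ * χ = 1) (c : ι → K) :
    Submodule.span K (Set.range fun p => ∑ q, (χ p q * c q) • b q) = ⊤ ↔ ∀ q, c q ≠ 0 := by
  constructor
  · intro hspan q hq
    have hker : Submodule.span K (Set.range fun p => ∑ q, (χ p q * c q) • b q)
        ≤ LinearMap.ker (b.coord q) := by
      rw [Submodule.span_le]
      rintro _ ⟨p, rfl⟩
      simp [Finsupp.single_apply, hq]
    have hbq := hker (hspan ▸ Submodule.mem_top : b q ∈ _)
    simp at hbq
  · intro hc
    rw [eq_top_iff, ← b.span_eq, Submodule.span_le]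
    rintro _ ⟨q, rfl⟩
    have hinv : ∑ p, ψ q p • ∑ q', (χ p q' * c q') • b q' = c q • b q := by
      simp_rw [Finset.smul_sum, smul_smul]
      rw [Finset.sum_comm]
      simp_rw [← mul_assoc, ← Finset.sum_smul, ← Finset.sum_mul, ← Matrix.mul_apply, hψχ,
        Matrix.one_apply, ite_mul, one_mul, zero_mul, ite_smul, zero_smul]
      simp
    have hbq : b q = (c q)⁻¹ • ∑ p, ψ q p • ∑ q', (χ p q' * c q') • b q' := by
      rw [hinv, smul_smul, inv_mul_cancel₀ (hc q), one_smul]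
    rw [SetLike.mem_coe, hbq]
    exact Submodule.smul_mem _ _ (Submodule.sum_mem _ fun p _ =>
      Submodule.smul_mem _ _ (Submodule.subset_span ⟨p, rfl⟩))

end Module.Basis

section

variable {d : ℕ} [NeZero d]

theorem ww_pow_val_eq_stdAddChar (n : ZMod d) : ww d ^ n.val = ZMod.stdAddChar n := by
  rw [ZMod.stdAddChar_apply, ZMod.toCircle_apply, ww, ← Complex.exp_nat_mul]
  congr 1
  ring

theorem Vm_eq_diagonal (y : ZMod d) : Vm d y = diagonal fun i => ZMod.stdAddChar (y * i) := by
  simp only [Vm, ww_pow_val_eq_stdAddChar]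

theorem sum_stdAddChar_mul (a : ZMod d) :
    ∑ x, ZMod.stdAddChar (x * a) = if a = 0 then (d : ℂ) else 0 := by
  rw [AddChar.sum_mulShift _ (ZMod.isPrimitive_stdAddChar d), ZMod.card]
  push_cast
  rfl

end

noncomputable def weyl (d : ℕ) [NeZero d] (q : ZMod d × ZMod d) : Matrix (ZMod d) (ZMod d) ℂ :=
  Um d q.1 * Vm d q.2

/-- Sign chosen so that conjugation by `weyl d p` multiplies `weyl d q` by
`stdAddChar (symplectic p q)`. -/
def symplectic {d : ℕ} (p q : ZMod d × ZMod d) : ZMod d := p.2 * q.1 - p.1 * q.2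

noncomputable def symplecticCharMatrix (d : ℕ) [NeZero d] :
    Matrix (ZMod d × ZMod d) (ZMod d × ZMod d) ℂ :=
  of fun p q => ZMod.stdAddChar (symplectic p q)

section

variable {d : ℕ} [NeZero d]

theorem weyl_apply (q : ZMod d × ZMod d) (i j : ZMod d) :
    weyl d q i j = if i = j + q.1 then ZMod.stdAddChar (q.2 * j) else 0 := by
  simp [weyl, Vm_eq_diagonal, Um, ite_mul]

theorem weyl_mul_weyl (p q : ZMod d × ZMod d) :
    weyl d p * weyl d q = ZMod.stdAddChar (p.2 * q.1) • weyl d (p + q) := by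
  ext i j
  simp only [mul_apply, Matrix.smul_apply, weyl_apply, smul_eq_mul, Prod.fst_add, Prod.snd_add,
    ite_mul, zero_mul, mul_ite, mul_zero, Finset.sum_ite_eq', Finset.mem_univ, if_true]
  rw [add_assoc, add_comm q.1, ← AddChar.map_add_eq_mul, ← AddChar.map_add_eq_mul]
  congr 2
  ring

theorem conjTranspose_weyl (p : ZMod d × ZMod d) :
    (weyl d p)ᴴ = ZMod.stdAddChar (p.1 * p.2) • weyl d (-p) := by
  ext i j
  simp only [conjTranspose_apply, weyl_apply, Matrix.smul_apply, smul_eq_mul, Prod.fst_neg,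
    Prod.snd_neg]
  by_cases h : j = i + p.1
  · subst h
    rw [if_pos rfl, if_pos (by ring), ← starRingEnd_apply, ← AddChar.map_neg_eq_conj,
      ← AddChar.map_add_eq_mul]
    congr 1
    ring
  · rw [if_neg h, if_neg (fun h' => h (by rw [h']; ring)), star_zero, mul_zero]

theorem weyl_mul_mul_conjTranspose (p q : ZMod d × ZMod d) :
    weyl d p * weyl d q * (weyl d p)ᴴ = ZMod.stdAddChar (symplectic p q) • weyl d q := by
  rw [weyl_mul_weyl, conjTranspose_weyl, smul_mul_smul_comm, weyl_mul_weyl, smul_smul,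
    add_neg_cancel_comm, ← AddChar.map_add_eq_mul, ← AddChar.map_add_eq_mul, symplectic]
  congr 2
  simp only [Prod.snd_add, Prod.fst_neg]
  ring

theorem trace_weyl (q : ZMod d × ZMod d) : (weyl d q).trace = if q = 0 then (d : ℂ) else 0 := by
  simp only [Matrix.trace, Matrix.diag, weyl_apply, left_eq_add]
  by_cases h1 : q.1 = 0
  · simp [h1, mul_comm q.2, sum_stdAddChar_mul, Prod.ext_iff]
  · simp [h1, Prod.ext_iff]

theorem trace_conjTranspose_weyl_mul_weyl (q r : ZMod d × ZMod d) :
    ((weyl d q)ᴴ * weyl d r).trace = if q = r then (d : ℂ) else 0 := by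
  rw [conjTranspose_weyl, Matrix.smul_mul, weyl_mul_weyl, smul_smul, trace_smul, trace_weyl,
    smul_eq_mul]
  simp only [neg_add_eq_zero]
  split_ifs with h
  · rw [← h, ← AddChar.map_add_eq_mul, Prod.snd_neg, neg_mul, mul_comm q.2, add_neg_cancel,
      AddChar.map_zero_eq_one, one_mul]
  · rw [mul_zero]

theorem trace_conjTranspose_weyl_mul_sum (q : ZMod d × ZMod d) (c : ZMod d × ZMod d → ℂ) :
    ((weyl d q)ᴴ * ∑ r, c r • weyl d r).trace = d * c q := by
  simp_rw [Matrix.mul_sum, trace_sum, Matrix.mul_smul, trace_smul,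
    trace_conjTranspose_weyl_mul_weyl, smul_eq_mul, mul_ite, mul_zero, Finset.sum_ite_eq,
    Finset.mem_univ, if_true, mul_comm]

theorem linearIndependent_weyl : LinearIndependent ℂ (weyl d) := by
  rw [Fintype.linearIndependent_iff]
  intro c hc q
  have hcq := trace_conjTranspose_weyl_mul_sum q c
  rw [hc, Matrix.mul_zero, trace_zero, zero_eq_mul] at hcq
  exact hcq.resolve_left (NeZero.ne _)

theorem sum_stdAddChar_symplectic (r : ZMod d × ZMod d) :
    ∑ p, ZMod.stdAddChar (symplectic p r) = if r = 0 then (d * d : ℂ) else 0 := by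
  have hsplit (p : ZMod d × ZMod d) : ZMod.stdAddChar (symplectic p r) =
      ZMod.stdAddChar (p.1 * -r.2) * ZMod.stdAddChar (p.2 * r.1) := by
    rw [← AddChar.map_add_eq_mul, symplectic]
    ring_nf
  simp_rw [hsplit, Fintype.sum_prod_type, ← Finset.sum_mul_sum, sum_stdAddChar_mul, neg_eq_zero]
  by_cases h1 : r.1 = 0 <;> by_cases h2 : r.2 = 0 <;> simp [h1, h2, Prod.ext_iff]

theorem symplecticCharMatrix_mul_self :
    symplecticCharMatrix d * symplecticCharMatrix d = (d * d : ℂ) • 1 := by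
  ext q r
  have hadd (p : ZMod d × ZMod d) : ZMod.stdAddChar (symplectic q p) *
      ZMod.stdAddChar (symplectic p r) = ZMod.stdAddChar (symplectic p (r - q)) := by
    rw [← AddChar.map_add_eq_mul, symplectic, symplectic, symplectic]
    congr 1
    simp only [Prod.fst_sub, Prod.snd_sub]
    ring
  simp only [mul_apply, symplecticCharMatrix, of_apply, hadd, sum_stdAddChar_symplectic,
    sub_eq_zero, Matrix.smul_apply, one_apply, smul_eq_mul, mul_ite, mul_one, mul_zero, eq_comm]

end

noncomputable def weylBasis (d : ℕ) [NeZero d] :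
    Module.Basis (ZMod d × ZMod d) ℂ (Matrix (ZMod d) (ZMod d) ℂ) :=
  basisOfLinearIndependentOfCardEqFinrank linearIndependent_weyl
    (by simp [Module.finrank_matrix, ZMod.card])

section

variable {d : ℕ} [NeZero d]

@[simp]
theorem coe_weylBasis : ⇑(weylBasis d) = weyl d :=
  coe_basisOfLinearIndependentOfCardEqFinrank _ _

theorem trace_conjTranspose_weyl_mul (A : Matrix (ZMod d) (ZMod d) ℂ) (q : ZMod d × ZMod d) :
    ((weyl d q)ᴴ * A).trace = d * (weylBasis d).repr A q := by
  conv_lhs => rw [← (weylBasis d).sum_repr A, coe_weylBasis]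
  exact trace_conjTranspose_weyl_mul_sum q _

theorem weylBasis_repr_ne_zero_iff (A : Matrix (ZMod d) (ZMod d) ℂ) (q : ZMod d × ZMod d) :
    (weylBasis d).repr A q ≠ 0 ↔ (A * weyl d (-q)).trace ≠ 0 := by
  rw [← mul_ne_zero_iff_left (Nat.cast_ne_zero.mpr (NeZero.ne d)), ← trace_conjTranspose_weyl_mul,
    conjTranspose_weyl, Matrix.smul_mul, trace_smul, smul_eq_mul, trace_mul_comm,
    ZMod.stdAddChar_apply, mul_ne_zero_iff_left (Circle.coe_ne_zero _)]

theorem weyl_mul_mul_conjTranspose_eq_sum (p : ZMod d × ZMod d)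
    (A : Matrix (ZMod d) (ZMod d) ℂ) :
    weyl d p * A * (weyl d p)ᴴ
      = ∑ q, (ZMod.stdAddChar (symplectic p q) * (weylBasis d).repr A q) • weyl d q := by
  conv_lhs => rw [← (weylBasis d).sum_repr A, coe_weylBasis]
  simp_rw [Matrix.mul_sum, Matrix.sum_mul, Matrix.mul_smul, Matrix.smul_mul,
    weyl_mul_mul_conjTranspose, smul_smul, mul_comm]

end

theorem informational_completeness_criterion_general (d : ℕ) [NeZero d]
    (T : Matrix (ZMod d) (ZMod d) ℂ) :
    Submodule.span ℂ (Set.range fun p : ZMod d × ZMod d =>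
        (1 / d : ℂ) • (Um d p.1 * Vm d p.2 * T * (Vm d p.2)ᴴ * (Um d p.1)ᴴ)) = ⊤ ↔
      ∀ x y : ZMod d, Matrix.trace (T * Um d x * Vm d y) ≠ 0 := by
  set χ := (d : ℂ)⁻¹ • symplecticCharMatrix d
  have hχχ : χ * χ = 1 := by
    have hd : (d : ℂ) ≠ 0 := Nat.cast_ne_zero.mpr (NeZero.ne d)
    rw [smul_mul_smul_comm, symplecticCharMatrix_mul_self, smul_smul,
      show (d : ℂ)⁻¹ * (d : ℂ)⁻¹ * (d * d) = 1 by field_simp, one_smul]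
  have hgen (p : ZMod d × ZMod d) :
      (1 / d : ℂ) • (Um d p.1 * Vm d p.2 * T * (Vm d p.2)ᴴ * (Um d p.1)ᴴ)
        = ∑ q, (χ p q * (weylBasis d).repr T q) • weylBasis d q := by
    have hconj : Um d p.1 * Vm d p.2 * T * (Vm d p.2)ᴴ * (Um d p.1)ᴴ
        = weyl d p * T * (weyl d p)ᴴ := by
      simp only [weyl, conjTranspose_mul, Matrix.mul_assoc]
    rw [hconj, weyl_mul_mul_conjTranspose_eq_sum, Finset.smul_sum, coe_weylBasis]
    simp only [smul_smul, χ, symplecticCharMatrix, Matrix.smul_apply, of_apply, smul_eq_mul,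
      one_div, mul_assoc]
  have hneg : (∀ q, (T * weyl d (-q)).trace ≠ 0) ↔ ∀ q, (T * weyl d q).trace ≠ 0 :=
    (neg_surjective.forall (p := fun q => (T * weyl d q).trace ≠ 0)).symm
  simp_rw [hgen, (weylBasis d).span_range_sum_smul_eq_top_iff hχχ, weylBasis_repr_ne_zero_iff,
    hneg, Prod.forall, weyl, Matrix.mul_assoc]

theorem informational_completeness_criterion (d : ℕ) (hd : 2 ≤ d) [NeZero d]
    (T : Matrix (ZMod d) (ZMod d) ℂ) (hT : T.PosSemidef) (htr : T.trace = 1) :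
    Submodule.span ℂ (Set.range fun p : ZMod d × ZMod d =>
        (1 / d : ℂ) • (Um d p.1 * Vm d p.2 * T * (Vm d p.2)ᴴ * (Um d p.1)ᴴ)) = ⊤ ↔
      ∀ x y : ZMod d, Matrix.trace (T * Um d x * Vm d y) ≠ 0 :=
  informational_completeness_criterion_general d T
end
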